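/- arXiv:1807.10514 — 2 statements merged into one kernel-verified Lean document; each statement's English description precedes it below -/
import Mathlib

section
/- Let f ∈ ℝ^V, let u_α denote the ROF minimizer and let u be a TV flow solution, both with datum f. Let f̄ ∈ ℝ^V be the constant function f̄(v) = (1/|V|) Σ_{w∈V} f(w). Then for every α > 0: ‖f̄‖₂ ≤ ‖u_α‖₂ ≤ ‖u(α)‖₂ ≤ ‖f‖₂. -/
/-!
A subgradient `p ∈ ∂J(u)` of the sublinear functional `J`, which vanishes on constants, satisfies
`∑ p = 0`, `⟨u, p⟩ = J(u)` and `⟨w, p⟩ ≤ J(w)` for all `w`. Both `(f - u_α) / α` (the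
Euler–Lagrange equation of the ROF problem) and `-u'(t)` are such subgradients.
The first identity gives `u_α` the mean of `f`, and `‖f̄‖₂ ≤ ‖u_α‖₂` is Cauchy–Schwarz.
Along the flow, `d/dt ‖u‖₂² = -2 J(u) ≤ 0` and `d/dt ⟨u, u_α⟩ ≥ -J(u_α)`; integrating on
`[0, α]` (the flow is Lipschitz, hence absolutely continuous) gives `‖u(α)‖₂ ≤ ‖f‖₂` and
`⟨u(α), u_α⟩ ≥ ⟨f, u_α⟩ - α J(u_α) = ‖u_α‖₂²`, and Cauchy–Schwarz concludes.
-/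

open Finset MeasureTheory

noncomputable section

/-- The graph total variation `J(u) = ∑_{(v,w) ∈ E} |u(w) - u(v)|`. -/
def tvJ {V : Type*} (E : Finset (V × V)) (u : V → ℝ) : ℝ :=
  ∑ e ∈ E, |u e.2 - u e.1|

/-- The subdifferential of the graph total variation at `u`. -/
def subdiffJ {V : Type*} [Fintype V] (E : Finset (V × V)) (u : V → ℝ) : Set (V → ℝ) :=
  {us | ∀ h : V → ℝ, (∑ v, (h v - u v) * us v) + tvJ E u ≤ tvJ E h}

/-- The divergence of an edge function `H`:
`(div H)(v) = ∑_{(w,v) ∈ E} H((w,v)) - ∑_{(v,w) ∈ E} H((v,w))`. -/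
def gdiv {V : Type*} [DecidableEq V] (E : Finset (V × V)) (H : V × V → ℝ) : V → ℝ :=
  fun v => (∑ e ∈ E, if e.2 = v then H e else 0) - (∑ e ∈ E, if e.1 = v then H e else 0)

/-- The ℓ² norm on `ℝ^V`. -/
def norm2 {V : Type*} [Fintype V] (u : V → ℝ) : ℝ :=
  Real.sqrt (∑ v, (u v) ^ 2)

/-- `u` minimizes `w ↦ ½‖f - w‖₂² + α J(w)` over `ℝ^V`. -/
def IsROFMinimizer {V : Type*} [Fintype V] (E : Finset (V × V)) (f : V → ℝ) (α : ℝ)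
    (u : V → ℝ) : Prop :=
  ∀ w : V → ℝ,
    (1 / 2) * (∑ v, (f v - u v) ^ 2) + α * tvJ E u ≤
      (1 / 2) * (∑ v, (f v - w v) ^ 2) + α * tvJ E w

/-- `u : [0,∞) → ℝ^V` is a TV flow solution with datum `f`: it is Lipschitz on `[0,∞)`,
`u(0) = f`, and `-u'(t) ∈ ∂J(u(t))` for almost every `t > 0`. -/
def IsTVFlowSolution {V : Type*} [Fintype V] (E : Finset (V × V)) (f : V → ℝ)
    (u : ℝ → V → ℝ) : Prop :=
  u 0 = f ∧ (∃ L : NNReal, LipschitzOnWith L u (Set.Ici 0)) ∧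
    ∃ u' : ℝ → V → ℝ, ∀ᵐ t ∂(volume : Measure ℝ), 0 < t →
      HasDerivAt u (u' t) t ∧ (fun v => -(u' t v)) ∈ subdiffJ E (u t)

end

open Filter Topology Set

section TotalVariation

variable {V : Type*} (E : Finset (V × V))

lemma tvJ_nonneg (u : V → ℝ) : 0 ≤ tvJ E u :=
  Finset.sum_nonneg fun _ _ => abs_nonneg _

lemma tvJ_const (c : ℝ) : tvJ E (fun _ => c) = 0 := by
  simp [tvJ]

lemma tvJ_add_le (u w : V → ℝ) : tvJ E (fun v => u v + w v) ≤ tvJ E u + tvJ E w := by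
  rw [tvJ, tvJ, tvJ, ← Finset.sum_add_distrib]
  refine Finset.sum_le_sum fun e _ => ?_
  calc |u e.2 + w e.2 - (u e.1 + w e.1)| = |(u e.2 - u e.1) + (w e.2 - w e.1)| := by ring_nf
    _ ≤ |u e.2 - u e.1| + |w e.2 - w e.1| := abs_add_le _ _

lemma tvJ_segment_le (u h : V → ℝ) {t : ℝ} (ht₀ : 0 ≤ t) (ht₁ : t ≤ 1) :
    tvJ E (fun v => u v + t * (h v - u v)) ≤ (1 - t) * tvJ E u + t * tvJ E h := by
  rw [tvJ, tvJ, tvJ, Finset.mul_sum, Finset.mul_sum, ← Finset.sum_add_distrib]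
  refine Finset.sum_le_sum fun e _ => ?_
  calc |u e.2 + t * (h e.2 - u e.2) - (u e.1 + t * (h e.1 - u e.1))|
      = |(1 - t) * (u e.2 - u e.1) + t * (h e.2 - h e.1)| := by ring_nf
    _ ≤ |(1 - t) * (u e.2 - u e.1)| + |t * (h e.2 - h e.1)| := abs_add_le _ _
    _ = (1 - t) * |u e.2 - u e.1| + t * |h e.2 - h e.1| := by
      rw [abs_mul, abs_mul, abs_of_nonneg (sub_nonneg.2 ht₁), abs_of_nonneg ht₀]

end TotalVariation

section Subgradient

variable {V : Type*} [Fintype V] {E : Finset (V × V)} {u p : V → ℝ}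

lemma sum_mul_le_tvJ_of_mem_subdiffJ (hp : p ∈ subdiffJ E u) (w : V → ℝ) :
    ∑ v, w v * p v ≤ tvJ E w := by
  have h := hp fun v => u v + w v
  simp only [add_sub_cancel_left] at h
  linarith [tvJ_add_le E u w]

lemma sum_mul_eq_tvJ_of_mem_subdiffJ (hp : p ∈ subdiffJ E u) :
    ∑ v, u v * p v = tvJ E u := by
  refine le_antisymm (sum_mul_le_tvJ_of_mem_subdiffJ hp u) ?_
  have h := hp fun _ => 0
  simp only [zero_sub, neg_mul, Finset.sum_neg_distrib, tvJ_const] at h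
  linarith

lemma sum_eq_zero_of_mem_subdiffJ (hp : p ∈ subdiffJ E u) : ∑ v, p v = 0 := by
  have h₁ := sum_mul_le_tvJ_of_mem_subdiffJ hp fun _ => 1
  have h₂ := sum_mul_le_tvJ_of_mem_subdiffJ hp fun _ => -1
  simp only [one_mul, neg_one_mul, Finset.sum_neg_distrib, tvJ_const] at h₁ h₂
  linarith

end Subgradient

lemma le_of_forall_le_add_mul {a b c : ℝ} (h : ∀ t, 0 < t → t ≤ 1 → a ≤ b + t * c) : a ≤ b := by
  have hlim : Tendsto (fun t => b + t * c) (𝓝[>] 0) (𝓝 b) := by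
    simpa using ((by fun_prop : Continuous fun t : ℝ => b + t * c).tendsto 0).mono_left
      nhdsWithin_le_nhds
  refine ge_of_tendsto hlim ?_
  filter_upwards [Ioc_mem_nhdsGT (zero_lt_one' ℝ)] with t ht using h t ht.1 ht.2

theorem IsROFMinimizer.div_mem_subdiffJ {V : Type*} [Fintype V] {E : Finset (V × V)}
    {f u : V → ℝ} {α : ℝ} (hu : IsROFMinimizer E f α u) (hα : 0 < α) :
    (fun v => (f v - u v) / α) ∈ subdiffJ E u := by
  intro h
  suffices key : ∑ v, (h v - u v) * (f v - u v) ≤ α * (tvJ E h - tvJ E u) by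
    have hdiv : ∑ v, (h v - u v) * ((f v - u v) / α) = (∑ v, (h v - u v) * (f v - u v)) / α := by
      simp only [Finset.sum_div, mul_div_assoc]
    rw [hdiv, div_add' _ _ _ hα.ne', div_le_iff₀ hα]
    linarith
  refine le_of_forall_le_add_mul (c := (1 / 2) * ∑ v, (h v - u v) ^ 2) fun t ht₀ ht₁ => ?_
  have hmin := hu fun v => u v + t * (h v - u v)
  have hJ := mul_le_mul_of_nonneg_left (tvJ_segment_le E u h ht₀.le ht₁) hα.le
  have hexp : ∑ v, (f v - (u v + t * (h v - u v))) ^ 2 = ∑ v, (f v - u v) ^ 2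
      - 2 * t * ∑ v, (h v - u v) * (f v - u v) + t ^ 2 * ∑ v, (h v - u v) ^ 2 := by
    simp only [Finset.mul_sum, ← Finset.sum_sub_distrib, ← Finset.sum_add_distrib]
    exact Finset.sum_congr rfl fun v _ => by ring
  rw [hexp] at hmin
  have hscaled : t * ∑ v, (h v - u v) * (f v - u v)
      ≤ t * (α * (tvJ E h - tvJ E u) + t * ((1 / 2) * ∑ v, (h v - u v) ^ 2)) := by
    linarith
  exact le_of_mul_le_mul_left hscaled ht₀

theorem AbsolutelyContinuousOnInterval.fun_finset_sum {ι F : Type*} [SeminormedAddCommGroup F]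
    (s : Finset ι) {f : ι → ℝ → F} {a b : ℝ}
    (hf : ∀ i ∈ s, AbsolutelyContinuousOnInterval (f i) a b) :
    AbsolutelyContinuousOnInterval (fun t => ∑ i ∈ s, f i t) a b := by
  classical
  induction s using Finset.induction_on with
  | empty =>
    simpa using (LipschitzWith.const (0 : F)).lipschitzOnWith.absolutelyContinuousOnInterval
  | insert i s hi ih =>
    simp only [Finset.sum_insert hi]
    exact (hf i (mem_insert_self i s)).fun_add (ih fun j hj => hf j (mem_insert_of_mem hj))

theorem AbsolutelyContinuousOnInterval.le_add_mul_of_ae_deriv_le {φ : ℝ → ℝ} {a b M : ℝ}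
    (hab : a ≤ b) (hφ : AbsolutelyContinuousOnInterval φ a b)
    (hM : ∀ᵐ t, t ∈ Ioo a b → deriv φ t ≤ M) : φ b ≤ φ a + M * (b - a) := by
  have hint : ∫ t in a..b, deriv φ t ≤ ∫ _ in a..b, M := by
    refine intervalIntegral.integral_mono_ae_restrict hab hφ.intervalIntegrable_deriv
      intervalIntegrable_const ?_
    rw [Measure.restrict_congr_set Ioo_ae_eq_Icc.symm]
    exact (ae_restrict_iff' measurableSet_Ioo).2 hM
  rw [hφ.integral_deriv_eq_sub, intervalIntegral.integral_const, smul_eq_mul] at hint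
  linarith

namespace IsTVFlowSolution

variable {V : Type*} [Fintype V] {E : Finset (V × V)} {f : V → ℝ} {u : ℝ → V → ℝ}

lemma absolutelyContinuousOnInterval_apply (hu : IsTVFlowSolution E f u) (v : V) {b : ℝ}
    (hb : 0 ≤ b) : AbsolutelyContinuousOnInterval (fun t => u t v) 0 b := by
  obtain ⟨-, ⟨L, hL⟩, -⟩ := hu
  refine (((LipschitzWith.eval v).comp_lipschitzOnWith hL).mono ?_).absolutelyContinuousOnInterval
  rw [uIcc_of_le hb]
  exact Icc_subset_Ici_self

lemma sum_sq_le (hu : IsTVFlowSolution E f u) {b : ℝ} (hb : 0 ≤ b) :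
    ∑ v, u b v ^ 2 ≤ ∑ v, f v ^ 2 := by
  have hac : AbsolutelyContinuousOnInterval (fun t => ∑ v, u t v * u t v) 0 b :=
    AbsolutelyContinuousOnInterval.fun_finset_sum _ fun v _ =>
      (hu.absolutelyContinuousOnInterval_apply v hb).fun_mul
        (hu.absolutelyContinuousOnInterval_apply v hb)
  obtain ⟨hu₀, -, u', hu'⟩ := hu
  have key := hac.le_add_mul_of_ae_deriv_le hb (M := 0) ?_
  · simpa only [hu₀, zero_mul, add_zero, sq] using key
  filter_upwards [hu'] with t ht ht_mem
  obtain ⟨hd, hp⟩ := ht ht_mem.1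
  have hdφ : HasDerivAt (fun s => ∑ v, u s v * u s v) (∑ v, (u' t v * u t v + u t v * u' t v)) t :=
    HasDerivAt.fun_sum fun v _ => (hasDerivAt_pi.1 hd v).mul (hasDerivAt_pi.1 hd v)
  have hderiv : ∑ v, (u' t v * u t v + u t v * u' t v) = -2 * ∑ v, u t v * -u' t v := by
    rw [Finset.mul_sum]
    exact Finset.sum_congr rfl fun v _ => by ring
  rw [hdφ.deriv, hderiv, sum_mul_eq_tvJ_of_mem_subdiffJ hp]
  linarith [tvJ_nonneg E (u t)]

lemma sum_mul_sub_le (hu : IsTVFlowSolution E f u) {b : ℝ} (hb : 0 ≤ b) (w : V → ℝ) :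
    ∑ v, f v * w v - b * tvJ E w ≤ ∑ v, u b v * w v := by
  have hac : AbsolutelyContinuousOnInterval (fun t => -∑ v, w v * u t v) 0 b :=
    (AbsolutelyContinuousOnInterval.fun_finset_sum _ fun v _ =>
      (hu.absolutelyContinuousOnInterval_apply v hb).const_mul (w v)).fun_neg
  obtain ⟨hu₀, -, u', hu'⟩ := hu
  have key := hac.le_add_mul_of_ae_deriv_le hb (M := tvJ E w) ?_
  · simp only [hu₀, sub_zero, mul_comm (w _)] at key
    linarith
  filter_upwards [hu'] with t ht ht_mem
  obtain ⟨hd, hp⟩ := ht ht_mem.1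
  have hdφ : HasDerivAt (fun s => -∑ v, w v * u s v) (-∑ v, w v * u' t v) t :=
    (HasDerivAt.fun_sum fun v _ => (hasDerivAt_pi.1 hd v).const_mul (w v)).neg
  rw [hdφ.deriv, ← Finset.sum_neg_distrib]
  simpa only [mul_neg] using sum_mul_le_tvJ_of_mem_subdiffJ hp w

end IsTVFlowSolution

section Norm

variable {V : Type*} [Fintype V]

lemma norm2_const_mean_le (x : V → ℝ) :
    norm2 (fun _ : V => (1 / (Fintype.card V : ℝ)) * ∑ w, x w) ≤ norm2 x := by
  refine Real.sqrt_le_sqrt ?_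
  have hcs := sq_sum_le_card_mul_sum_sq (s := Finset.univ) (f := x)
  rw [Finset.card_univ] at hcs
  calc ∑ _v : V, ((1 / (Fintype.card V : ℝ)) * ∑ w, x w) ^ 2
      = (∑ w, x w) ^ 2 / Fintype.card V := by
        rw [Finset.sum_const, Finset.card_univ, nsmul_eq_mul]
        rcases eq_or_ne (Fintype.card V : ℝ) 0 with hV | hV
        · simp [hV]
        · field_simp
    _ ≤ ∑ w, x w ^ 2 := div_le_of_le_mul₀ (by positivity) (by positivity) (by linarith)

lemma norm2_le_of_sum_sq_le_sum_mul {x y : V → ℝ} (h : ∑ v, x v ^ 2 ≤ ∑ v, y v * x v) :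
    norm2 x ≤ norm2 y := by
  have hcs : norm2 x * norm2 x ≤ norm2 y * norm2 x := by
    rw [norm2, Real.mul_self_sqrt (Finset.sum_nonneg fun v _ => sq_nonneg (x v))]
    exact h.trans (Real.sum_mul_le_sqrt_mul_sqrt _ y x)
  rcases (show 0 ≤ norm2 x from Real.sqrt_nonneg _).eq_or_lt with hx | hx
  · rw [← hx]
    exact Real.sqrt_nonneg _
  · exact le_of_mul_le_mul_right hcs hx

end Norm

theorem rof_flow_norm_comparison_general
    {V : Type*} [Fintype V] (E : Finset (V × V))
    (f : V → ℝ) (u : ℝ → V → ℝ) (hu : IsTVFlowSolution E f u)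
    (α : ℝ) (hα : 0 < α) (uα : V → ℝ) (huα : IsROFMinimizer E f α uα) :
    norm2 (fun _ : V => (1 / (Fintype.card V : ℝ)) * ∑ w, f w) ≤ norm2 uα ∧
      norm2 uα ≤ norm2 (u α) ∧ norm2 (u α) ≤ norm2 f := by
  have hp := huα.div_mem_subdiffJ hα
  have hmean : ∑ v, uα v = ∑ v, f v := by
    have h := sum_eq_zero_of_mem_subdiffJ hp
    rw [← Finset.sum_div, div_eq_zero_iff, Finset.sum_sub_distrib] at h
    exact (sub_eq_zero.1 (h.resolve_right hα.ne')).symm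
  have henergy : ∑ v, uα v * (f v - uα v) = α * tvJ E uα := by
    have h := sum_mul_eq_tvJ_of_mem_subdiffJ hp
    simp only [mul_div_assoc', ← Finset.sum_div] at h
    rw [div_eq_iff hα.ne'] at h
    linarith
  refine ⟨hmean ▸ norm2_const_mean_le uα, norm2_le_of_sum_sq_le_sum_mul ?_,
    Real.sqrt_le_sqrt (hu.sum_sq_le hα.le)⟩
  have hflow := hu.sum_mul_sub_le hα.le uα
  have hsplit : ∑ v, uα v ^ 2 = ∑ v, f v * uα v - ∑ v, uα v * (f v - uα v) := by
    rw [← Finset.sum_sub_distrib]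
    exact Finset.sum_congr rfl fun v _ => by ring
  linarith

/-- `‖f̄‖₂ ≤ ‖u_α‖₂ ≤ ‖u(α)‖₂ ≤ ‖f‖₂` for every `α > 0`. -/
theorem rof_flow_norm_comparison
    {V : Type*} [Fintype V] [DecidableEq V] [Nonempty V] (E : Finset (V × V))
    (hE : ∀ v w : V, (v, w) ∈ E → (w, v) ∉ E)
    (hconn : (SimpleGraph.fromRel (fun v w : V => (v, w) ∈ E)).Connected)
    (f : V → ℝ) (u : ℝ → V → ℝ) (hu : IsTVFlowSolution E f u)
    (α : ℝ) (hα : 0 < α) (uα : V → ℝ) (huα : IsROFMinimizer E f α uα) :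
    norm2 (fun _ : V => (1 / (Fintype.card V : ℝ)) * ∑ w, f w) ≤ norm2 uα ∧
      norm2 uα ≤ norm2 (u α) ∧ norm2 (u α) ≤ norm2 f :=
  rof_flow_norm_comparison_general E f u hu α hα uα huα
end

section
/- Let f ∈ ℝ^V, let u_α denote the ROF minimizer and let u be a TV flow solution, both with datum f, and let α > 0. If ⟨−u′(t), u(α)⟩ = J(u(α)) for almost every t ∈ (0, α), then u(α) = u_α. -/
open Finset MeasureTheory

noncomputable section

/-!
Fix a test function `w` and pair the flow with `w - u(α)`. Along the flow, `-u'(t)` is a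
subgradient of the positively one-homogeneous functional `J`, so `⟨-u'(t), w⟩ ≤ J(w)`, while the
hypothesis gives `⟨-u'(t), u(α)⟩ = J(u(α))`; hence `t ↦ ⟨w - u(α), u(t)⟩` has derivative at least
`J(u(α)) - J(w)` almost everywhere on `(0, α)`. Since it is Lipschitz, hence absolutely
continuous, integrating from `0` to `α` yields the Euler–Lagrange inequality
`⟨w - u(α), f - u(α)⟩ + α J(u(α)) ≤ α J(w)`. Taking `w = u_α` and expanding
`‖f - u_α‖²` around `u(α)`, the minimality of `u_α` then forces `‖u(α) - u_α‖² ≤ 0`.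
-/

open Set Filter Matrix

theorem LipschitzOnWith.mul_sub_le_image_sub_of_ae_le_deriv {g g' : ℝ → ℝ} {K : NNReal}
    {a b C : ℝ} (hab : a ≤ b) (hg : LipschitzOnWith K g (Icc a b))
    (hderiv : ∀ᵐ t, t ∈ Ioo a b → HasDerivAt g (g' t) t ∧ C ≤ g' t) :
    C * (b - a) ≤ g b - g a := by
  have hac : AbsolutelyContinuousOnInterval g a b := by
    rw [← uIcc_of_le hab] at hg
    exact hg.absolutelyContinuousOnInterval
  have hC : (fun _ => C) ≤ᵐ[volume.restrict (Icc a b)] deriv g := by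
    rw [EventuallyLE, ← Measure.restrict_congr_set Ioo_ae_eq_Icc,
      ae_restrict_iff' measurableSet_Ioo]
    filter_upwards [hderiv] with t ht hmem
    exact (ht hmem).1.deriv ▸ (ht hmem).2
  calc C * (b - a) = ∫ _ in a..b, C := by
        rw [intervalIntegral.integral_const, smul_eq_mul, mul_comm]
    _ ≤ ∫ t in a..b, deriv g t :=
      intervalIntegral.integral_mono_ae_restrict hab intervalIntegrable_const
        hac.intervalIntegrable_deriv hC
    _ = g b - g a := hac.integral_deriv_eq_sub

section TotalVariation

variable {V : Type*} (E : Finset (V × V))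

theorem tvJ_zero : tvJ E (0 : V → ℝ) = 0 := by
  simp [tvJ]

theorem tvJ_smul (c : ℝ) (u : V → ℝ) : tvJ E (c • u) = |c| * tvJ E u := by
  simp only [tvJ, Finset.mul_sum, Pi.smul_apply, smul_eq_mul, ← mul_sub, abs_mul]

variable [Fintype V] {E} {u us : V → ℝ}

theorem dotProduct_eq_tvJ_of_mem_subdiffJ (hus : us ∈ subdiffJ E u) : u ⬝ᵥ us = tvJ E u := by
  have h0 : (0 - u) ⬝ᵥ us + tvJ E u ≤ tvJ E 0 := hus 0
  have h2 : ((2 : ℝ) • u - u) ⬝ᵥ us + tvJ E u ≤ tvJ E ((2 : ℝ) • u) := hus ((2 : ℝ) • u)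
  rw [tvJ_zero, zero_sub, neg_dotProduct] at h0
  rw [tvJ_smul, two_smul, add_sub_cancel_right, abs_two] at h2
  linarith

theorem dotProduct_le_tvJ_of_mem_subdiffJ (hus : us ∈ subdiffJ E u) (w : V → ℝ) :
    w ⬝ᵥ us ≤ tvJ E w := by
  have hw : (w - u) ⬝ᵥ us + tvJ E u ≤ tvJ E w := hus w
  rw [sub_dotProduct, dotProduct_eq_tvJ_of_mem_subdiffJ hus] at hw
  linarith

end TotalVariation

section ROF

variable {V : Type*} [Fintype V] {E : Finset (V × V)} {f : V → ℝ} {α : ℝ}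

theorem sum_sq_sub_eq_sum_sq_sub_add (f u w : V → ℝ) :
    ∑ v, (f v - u v) ^ 2 =
      ∑ v, (f v - w v) ^ 2 - 2 * ((u - w) ⬝ᵥ (f - w)) + (u - w) ⬝ᵥ (u - w) := by
  simp only [dotProduct, Finset.mul_sum, ← Finset.sum_sub_distrib, ← Finset.sum_add_distrib,
    Pi.sub_apply]
  exact Finset.sum_congr rfl fun v _ => by ring

theorem IsROFMinimizer.eq_of_forall_dotProduct_le {u w : V → ℝ} (hu : IsROFMinimizer E f α u)
    (hw : ∀ h, (h - w) ⬝ᵥ (f - w) + α * tvJ E w ≤ α * tvJ E h) : u = w := by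
  have hmin := hu w
  have hvar := hw u
  have hsq := sum_sq_sub_eq_sum_sq_sub_add f u w
  have hnonneg : 0 ≤ (u - w) ⬝ᵥ (u - w) := dotProduct_self_star_nonneg (u - w)
  have hzero : (u - w) ⬝ᵥ (u - w) = 0 := by linarith
  exact sub_eq_zero.1 (dotProduct_self_eq_zero.1 hzero)

end ROF

theorem dotProduct_sub_le_tvJ_of_tvFlow {V : Type*} [Fintype V] {E : Finset (V × V)}
    {u u' : ℝ → V → ℝ} {L : NNReal} {α : ℝ} (hα : 0 ≤ α)
    (hLip : LipschitzOnWith L u (Ici 0))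
    (hflow : ∀ᵐ t, 0 < t → HasDerivAt u (u' t) t ∧ -u' t ∈ subdiffJ E (u t))
    (hcond : ∀ᵐ t, t ∈ Ioo 0 α → -u' t ⬝ᵥ u α = tvJ E (u α)) (w : V → ℝ) :
    (w - u α) ⬝ᵥ (u 0 - u α) + α * tvJ E (u α) ≤ α * tvJ E w := by
  set ℓ := LinearMap.toContinuousLinearMap (dotProductBilin ℝ ℝ (w - u α))
  have hℓ : ∀ x, ℓ x = (w - u α) ⬝ᵥ x := fun x => by simp [ℓ]
  have hg : LipschitzOnWith (‖ℓ‖₊ * L) (ℓ ∘ u) (Icc 0 α) :=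
    ℓ.lipschitz.comp_lipschitzOnWith (hLip.mono Icc_subset_Ici_self)
  have hderiv : ∀ᵐ t, t ∈ Ioo 0 α →
      HasDerivAt (ℓ ∘ u) (ℓ (u' t)) t ∧ tvJ E (u α) - tvJ E w ≤ ℓ (u' t) := by
    filter_upwards [hflow, hcond] with t hflow_t hcond_t ht
    obtain ⟨hu', hsub⟩ := hflow_t ht.1
    refine ⟨ℓ.hasFDerivAt.comp_hasDerivAt t hu', ?_⟩
    have hw := dotProduct_le_tvJ_of_mem_subdiffJ hsub w
    rw [dotProduct_neg] at hw
    rw [hℓ, ← hcond_t ht, sub_dotProduct, neg_dotProduct, dotProduct_comm (u' t)]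
    linarith
  have hmono := hg.mul_sub_le_image_sub_of_ae_le_deriv hα hderiv
  simp only [Function.comp_apply, hℓ, dotProduct_sub, sub_zero] at hmono ⊢
  linarith

theorem flow_eq_rof_of_inner_condition_general
    {V : Type*} [Fintype V] (E : Finset (V × V))
    (f : V → ℝ) (α : ℝ) (hα : 0 < α)
    (uα : V → ℝ) (huα : IsROFMinimizer E f α uα)
    (u u' : ℝ → V → ℝ) (hu0 : u 0 = f)
    (hLip : ∃ L : NNReal, LipschitzOnWith L u (Set.Ici 0))
    (hflow : ∀ᵐ t ∂(volume : Measure ℝ), 0 < t →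
      HasDerivAt u (u' t) t ∧ (fun v => -(u' t v)) ∈ subdiffJ E (u t))
    (hcond : ∀ᵐ t ∂(volume : Measure ℝ), t ∈ Set.Ioo (0 : ℝ) α →
      ∑ v, (-(u' t v)) * u α v = tvJ E (u α)) :
    u α = uα := by
  obtain ⟨L, hL⟩ := hLip
  have hvar := dotProduct_sub_le_tvJ_of_tvFlow hα.le hL hflow hcond
  rw [hu0] at hvar
  exact (huα.eq_of_forall_dotProduct_le hvar).symm

/-- if `⟨-u'(t), u(α)⟩ = J(u(α))` for a.e. `t ∈ (0,α)`, then `u(α) = u_α`. -/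
theorem flow_eq_rof_of_inner_condition
    {V : Type*} [Fintype V] [DecidableEq V] [Nonempty V] (E : Finset (V × V))
    (hE : ∀ v w : V, (v, w) ∈ E → (w, v) ∉ E)
    (hconn : (SimpleGraph.fromRel (fun v w : V => (v, w) ∈ E)).Connected)
    (f : V → ℝ) (α : ℝ) (hα : 0 < α)
    (uα : V → ℝ) (huα : IsROFMinimizer E f α uα)
    (u u' : ℝ → V → ℝ) (hu0 : u 0 = f)
    (hLip : ∃ L : NNReal, LipschitzOnWith L u (Set.Ici 0))
    (hflow : ∀ᵐ t ∂(volume : Measure ℝ), 0 < t →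
      HasDerivAt u (u' t) t ∧ (fun v => -(u' t v)) ∈ subdiffJ E (u t))
    (hcond : ∀ᵐ t ∂(volume : Measure ℝ), t ∈ Set.Ioo (0 : ℝ) α →
      ∑ v, (-(u' t v)) * u α v = tvJ E (u α)) :
    u α = uα :=
  flow_eq_rof_of_inner_condition_general E f α hα uα huα u u' hu0 hLip hflow hcond
end
end
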